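/- For any Blotto data, any positive solution γ* of Equation (2), and any vector x^A ∈ ℝ^n with x^A_i ≥ 0 for all i and Σ_{i=1}^n x^A_i ≤ X_A, one has Σ_{i=1}^n v^A_i · F_{B*_i}(x^A_i) ≤ Σ_{i=1}^n v^A_i · ∫_{[0,∞)} F_{B*_i}(x) dμ_{A*_i}(x). -/

import Mathlib

/-! Against B's marginals, A's payoff `v^A_i F_{B*_i}(x)` on battlefield `i` is at most the affine
function `λ*_A x + c_i`, where `c_i = v^A_i - γ* v^B_i` on `Ω_A(γ*)` and `c_i = 0` off it, because
`F_{B*_i}` is an affine function truncated at `1`. Summing and using the budget bounds A's payoff by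
`λ*_A X_A + Σ c_i`. Equation (2) amounts to `λ*_A = γ* λ*_B`, and then this bound equals the right-hand
side: each `μ_{A*_i}` is an atom at `0` plus a uniform density on an interval on which `F_{B*_i}` is
affine, so the integrals are explicit. -/

open Finset MeasureTheory

/-- Normalized battlefield values: `nv w i = w i / ∑_j w j`. -/
noncomputable def nv {n : ℕ} (w : Fin n → ℝ) (i : Fin n) : ℝ := w i / ∑ j, w j

/-- The set `Ω_A(γ) = {i : v^A_i / v^B_i > γ}`. -/
noncomputable def OmegaA {n : ℕ} (wA wB : Fin n → ℝ) (γ : ℝ) : Finset (Fin n) :=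
  Finset.univ.filter fun i => γ < nv wA i / nv wB i

/-- Equation (2). -/
def Eq2 {n : ℕ} (XA XB : ℝ) (wA wB : Fin n → ℝ) (γ : ℝ) : Prop :=
  XB * γ / XA =
    (γ ^ 2 * ∑ i ∈ OmegaA wA wB γ, (nv wB i) ^ 2 / nv wA i
        + ∑ i ∈ (OmegaA wA wB γ)ᶜ, nv wA i) /
    (∑ i ∈ OmegaA wA wB γ, nv wB i
        + (γ ^ 2)⁻¹ * ∑ i ∈ (OmegaA wA wB γ)ᶜ, (nv wA i) ^ 2 / nv wB i)

/-- The multiplier λ*_A associated with a solution γ of Equation (2). -/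
noncomputable def lamA {n : ℕ} (XB : ℝ) (wA wB : Fin n → ℝ) (γ : ℝ) : ℝ :=
  γ ^ 2 / (2 * XB) * ∑ i ∈ OmegaA wA wB γ, (nv wB i) ^ 2 / nv wA i
    + 1 / (2 * XB) * ∑ i ∈ (OmegaA wA wB γ)ᶜ, nv wA i

/-- The multiplier λ*_B associated with a solution γ of Equation (2). -/
noncomputable def lamB {n : ℕ} (XA : ℝ) (wA wB : Fin n → ℝ) (γ : ℝ) : ℝ :=
  1 / (2 * XA) * ∑ i ∈ OmegaA wA wB γ, nv wB i
    + 1 / (2 * γ ^ 2 * XA) * ∑ i ∈ (OmegaA wA wB γ)ᶜ, (nv wA i) ^ 2 / nv wB i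

/-- The uniform-type CDF `F_{A*_i}`. -/
noncomputable def FAstar {n : ℕ} (XA XB : ℝ) (wA wB : Fin n → ℝ) (γ : ℝ) (i : Fin n)
    (x : ℝ) : ℝ :=
  if x < 0 then 0
  else if i ∈ OmegaA wA wB γ then
    min (x * lamB XA wA wB γ / nv wB i) 1
  else
    min (1 - nv wA i * lamB XA wA wB γ / (nv wB i * lamA XB wA wB γ)
          + x * lamB XA wA wB γ / nv wB i) 1

/-- The uniform-type CDF `F_{B*_i}`. -/
noncomputable def FBstar {n : ℕ} (XA XB : ℝ) (wA wB : Fin n → ℝ) (γ : ℝ) (i : Fin n)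
    (x : ℝ) : ℝ :=
  if x < 0 then 0
  else if i ∈ OmegaA wA wB γ then
    min (1 - nv wB i * lamA XB wA wB γ / (nv wA i * lamB XA wA wB γ)
          + x * lamA XB wA wB γ / nv wA i) 1
  else
    min (x * lamA XB wA wB γ / nv wA i) 1

open Set

noncomputable def atomPlusUniform (α s b : ℝ) : Measure ℝ :=
  ENNReal.ofReal α • Measure.dirac 0 + ENNReal.ofReal s • volume.restrict (Icc 0 b)

instance (α s b : ℝ) : IsFiniteMeasure (atomPlusUniform α s b) :=
  ⟨by simp [atomPlusUniform, ENNReal.mul_lt_top]⟩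

lemma atomPlusUniform_Iic {α s b : ℝ} (hα : 0 ≤ α) (hs : 0 ≤ s) (hb0 : 0 ≤ b)
    (hb : α + s * b = 1) (x : ℝ) :
    atomPlusUniform α s b (Iic x)
      = ENNReal.ofReal (if x < 0 then 0 else min (α + s * x) 1) := by
  have hIcc : Iic x ∩ Icc 0 b = Icc 0 (min x b) := by
    ext y; simp only [mem_inter_iff, Set.mem_Iic, Set.mem_Icc, le_min_iff]; tauto
  rw [atomPlusUniform, Measure.add_apply, Measure.smul_apply, Measure.smul_apply,
    Measure.dirac_apply' _ measurableSet_Iic, Measure.restrict_apply measurableSet_Iic, hIcc,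
    Real.volume_Icc, sub_zero, smul_eq_mul, smul_eq_mul]
  split_ifs with hx
  · have : (0 : ℝ) ∉ Iic x := fun h => (not_lt.2 (Set.mem_Iic.1 h)) hx
    simp [this, ENNReal.ofReal_of_nonpos (min_le_left x b |>.trans hx.le)]
  · push Not at hx
    rw [indicator_of_mem (Set.mem_Iic.2 hx), Pi.one_apply, mul_one, ← ENNReal.ofReal_mul hs,
      ← ENNReal.ofReal_add hα (mul_nonneg hs (le_min hx hb0)), ← hb,
      min_add_add_left, mul_min_of_nonneg _ _ hs]

lemma eq_atomPlusUniform_of_Iic {μ : Measure ℝ} {α s b : ℝ} (hα : 0 ≤ α) (hs : 0 ≤ s)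
    (hb0 : 0 ≤ b) (hb : α + s * b = 1)
    (hμ : ∀ x, μ (Iic x) = ENNReal.ofReal (if x < 0 then 0 else min (α + s * x) 1)) :
    μ = atomPlusUniform α s b :=
  (Measure.ext_of_Iic _ _ fun x => by rw [hμ, atomPlusUniform_Iic hα hs hb0 hb]).symm

lemma ae_mem_Icc_atomPlusUniform {α s b : ℝ} (hb : 0 ≤ b) :
    ∀ᵐ x ∂atomPlusUniform α s b, x ∈ Icc 0 b := by
  rw [atomPlusUniform, ae_add_measure_iff]
  refine ⟨Measure.ae_smul_measure ?_ _,
    Measure.ae_smul_measure (ae_restrict_mem measurableSet_Icc) _⟩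
  rw [ae_dirac_eq]
  exact Filter.eventually_pure.2 (left_mem_Icc.2 hb)

lemma integral_atomPlusUniform_affine {α s b : ℝ} (hα : 0 ≤ α) (hs : 0 ≤ s) (hb : 0 ≤ b)
    (p q : ℝ) :
    ∫ x, (p + q * x) ∂atomPlusUniform α s b = α * p + s * (p * b + q * b ^ 2 / 2) := by
  have hcont : Continuous fun x : ℝ => p + q * x := by fun_prop
  rw [atomPlusUniform, integral_add_measure, integral_smul_measure, integral_smul_measure,
    integral_dirac, integral_Icc_eq_integral_Ioc, ← intervalIntegral.integral_of_le hb,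
    intervalIntegral.integral_add intervalIntegrable_const
      (intervalIntegral.intervalIntegrable_id.const_mul q),
    intervalIntegral.integral_const_mul, integral_id, ENNReal.toReal_ofReal hα,
    ENNReal.toReal_ofReal hs]
  · simp only [intervalIntegral.integral_const, smul_eq_mul]
    ring
  · exact (integrable_dirac (by simp)).smul_measure ENNReal.ofReal_ne_top
  · exact (hcont.integrableOn_Icc).smul_measure ENNReal.ofReal_ne_top

lemma setIntegral_Ici_eq_of_Iic_eq {μ : Measure ℝ} {α s b : ℝ} (hα : 0 ≤ α) (hs : 0 ≤ s)
    (hb0 : 0 ≤ b) (hb : α + s * b = 1)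
    (hμ : ∀ x, μ (Iic x) = ENNReal.ofReal (if x < 0 then 0 else min (α + s * x) 1))
    {f : ℝ → ℝ} {p q : ℝ} (hf : ∀ x ∈ Icc 0 b, f x = p + q * x) :
    ∫ x in Ici 0, f x ∂μ = p + q * (s * b ^ 2 / 2) := by
  have hae := ae_mem_Icc_atomPlusUniform (α := α) (s := s) hb0
  rw [eq_atomPlusUniform_of_Iic hα hs hb0 hb hμ,
    Measure.restrict_eq_self_of_ae_mem (s := Ici 0) (hae.mono fun x hx => hx.1),
    integral_congr_ae (hae.mono hf), integral_atomPlusUniform_affine hα hs hb0]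
  linear_combination p * hb

section Blotto

variable {n : ℕ} {XA XB : ℝ} {wA wB : Fin n → ℝ} {γ : ℝ} {i : Fin n}

lemma nv_pos {w : Fin n → ℝ} (hw : ∀ i, 0 < w i) (i : Fin n) : 0 < nv w i :=
  div_pos (hw i) (sum_pos (fun j _ => hw j) ⟨i, mem_univ i⟩)

lemma lamB_nonneg (hXA : 0 < XA) (hwA : ∀ i, 0 < wA i) (hwB : ∀ i, 0 < wB i) :
    0 ≤ lamB XA wA wB γ := by
  have hA := nv_pos hwA; have hB := nv_pos hwB
  unfold lamB
  refine add_nonneg (mul_nonneg (by positivity) (sum_nonneg fun i _ => (hB i).le))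
    (mul_nonneg (by positivity) (sum_nonneg fun i _ => (div_pos (pow_pos (hA i) 2) (hB i)).le))

lemma eq2_iff (hXA : XA ≠ 0) (hXB : XB ≠ 0) (hγ : γ ≠ 0) :
    Eq2 XA XB wA wB γ ↔
      XB * γ / XA = 2 * XB * lamA XB wA wB γ / (2 * XA * lamB XA wA wB γ) := by
  unfold Eq2 lamA lamB
  rw [iff_eq_eq]
  congr 2
  · field_simp
  · field_simp

lemma lamB_pos (hXA : 0 < XA) (hXB : 0 < XB) (hγ : 0 < γ) (hwA : ∀ i, 0 < wA i)
    (hwB : ∀ i, 0 < wB i) (heq : Eq2 XA XB wA wB γ) : 0 < lamB XA wA wB γ := by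
  refine (lamB_nonneg hXA hwA hwB).lt_of_ne' fun h0 => ?_
  rw [eq2_iff hXA.ne' hXB.ne' hγ.ne', h0, mul_zero, div_zero] at heq
  exact (div_pos (mul_pos hXB hγ) hXA).ne' heq

lemma lamA_eq_mul_lamB (hXA : 0 < XA) (hXB : 0 < XB) (hγ : 0 < γ) (hwA : ∀ i, 0 < wA i)
    (hwB : ∀ i, 0 < wB i) (heq : Eq2 XA XB wA wB γ) :
    lamA XB wA wB γ = γ * lamB XA wA wB γ := by
  have hLB := lamB_pos hXA hXB hγ hwA hwB heq
  rw [eq2_iff hXA.ne' hXB.ne' hγ.ne', div_eq_div_iff hXA.ne' (by positivity)] at heq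
  have : 2 * XB * XA ≠ 0 := by positivity
  apply mul_left_cancel₀ this
  linear_combination -heq

variable (hwA : ∀ i, 0 < wA i) (hwB : ∀ i, 0 < wB i) (hLB : 0 < lamB XA wA wB γ)
  (hrel : lamA XB wA wB γ = γ * lamB XA wA wB γ)
include hwA hLB hrel

lemma nv_mul_FBstar_le {x : ℝ} (hx : 0 ≤ x) :
    nv wA i * FBstar XA XB wA wB γ i x
      ≤ lamA XB wA wB γ * x + if i ∈ OmegaA wA wB γ then nv wA i - γ * nv wB i else 0 := by
  have hvA := nv_pos hwA i
  unfold FBstar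
  rw [if_neg hx.not_gt]
  split_ifs with hi
  · calc _ ≤ nv wA i * (1 - nv wB i * lamA XB wA wB γ / (nv wA i * lamB XA wA wB γ)
              + x * lamA XB wA wB γ / nv wA i) :=
          mul_le_mul_of_nonneg_left (min_le_left _ _) hvA.le
      _ = _ := by rw [hrel]; field_simp; ring
  · calc _ ≤ nv wA i * (x * lamA XB wA wB γ / nv wA i) :=
          mul_le_mul_of_nonneg_left (min_le_left _ _) hvA.le
      _ = _ := by field_simp; ring

variable (hγ : 0 < γ)
include hwB hγ

lemma nv_mul_integral_FBstar_of_mem {μ : Measure ℝ}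
    (hcdf : ∀ x, μ (Iic x) = ENNReal.ofReal (FAstar XA XB wA wB γ i x))
    (hi : i ∈ OmegaA wA wB γ) :
    nv wA i * ∫ x in Ici 0, FBstar XA XB wA wB γ i x ∂μ = nv wA i - γ * nv wB i / 2 := by
  have hvA := nv_pos hwA i
  have hvB := nv_pos hwB i
  have hLA : 0 < lamA XB wA wB γ := hrel ▸ mul_pos hγ hLB
  rw [setIntegral_Ici_eq_of_Iic_eq (α := 0) (s := lamB XA wA wB γ / nv wB i)
    (b := nv wB i / lamB XA wA wB γ)
    (p := 1 - nv wB i * lamA XB wA wB γ / (nv wA i * lamB XA wA wB γ))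
    (q := lamA XB wA wB γ / nv wA i) le_rfl (by positivity) (by positivity)
    (by field_simp; ring)]
  · rw [hrel]; field_simp; ring
  · intro x
    rw [hcdf]
    simp only [FAstar, hi, if_true, zero_add]
    ring_nf
  · intro x hx
    have hxb : x * lamB XA wA wB γ ≤ nv wB i := (le_div_iff₀ hLB).1 hx.2
    simp only [FBstar, hi, if_true, if_neg hx.1.not_gt]
    rw [min_eq_left]
    · ring
    · rw [add_comm, ← le_sub_iff_add_le, sub_sub_cancel, div_le_div_iff₀ hvA (by positivity)]
      nlinarith [mul_le_mul_of_nonneg_right hxb (mul_pos hLA hvA).le]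

lemma nv_mul_integral_FBstar_of_notMem {μ : Measure ℝ}
    (hcdf : ∀ x, μ (Iic x) = ENNReal.ofReal (FAstar XA XB wA wB γ i x))
    (hi : i ∉ OmegaA wA wB γ) :
    nv wA i * ∫ x in Ici 0, FBstar XA XB wA wB γ i x ∂μ
      = nv wA i ^ 2 / (2 * γ * nv wB i) := by
  have hvA := nv_pos hwA i
  have hvB := nv_pos hwB i
  have hLA : 0 < lamA XB wA wB γ := hrel ▸ mul_pos hγ hLB
  have hratio : nv wA i ≤ γ * nv wB i := by
    simpa [OmegaA, div_le_iff₀ hvB, mul_comm] using hi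
  have hatom : nv wA i * lamB XA wA wB γ / (nv wB i * lamA XB wA wB γ) ≤ 1 := by
    rw [div_le_one (by positivity), hrel]
    nlinarith [mul_le_mul_of_nonneg_right hratio hLB.le]
  rw [setIntegral_Ici_eq_of_Iic_eq
    (α := 1 - nv wA i * lamB XA wA wB γ / (nv wB i * lamA XB wA wB γ))
    (s := lamB XA wA wB γ / nv wB i) (b := nv wA i / lamA XB wA wB γ) (p := 0)
    (q := lamA XB wA wB γ / nv wA i) (sub_nonneg.2 hatom) (by positivity) (by positivity)
    (by field_simp; ring)]
  · rw [hrel]; field_simp; ring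
  · intro x
    rw [hcdf]
    simp only [FAstar, hi, if_false]
    ring_nf
  · intro x hx
    have hxb : x * lamA XB wA wB γ ≤ nv wA i := (le_div_iff₀ hLA).1 hx.2
    simp only [FBstar, hi, if_false, if_neg hx.1.not_gt]
    rw [min_eq_left ((div_le_one hvA).2 hxb)]
    ring

lemma nv_mul_integral_FBstar {μ : Measure ℝ}
    (hcdf : ∀ x, μ (Iic x) = ENNReal.ofReal (FAstar XA XB wA wB γ i x)) :
    nv wA i * ∫ x in Ici 0, FBstar XA XB wA wB γ i x ∂μ
      = if i ∈ OmegaA wA wB γ then nv wA i - γ * nv wB i / 2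
        else nv wA i ^ 2 / (2 * γ * nv wB i) := by
  split_ifs with hi
  · exact nv_mul_integral_FBstar_of_mem hwA hwB hLB hrel hγ hcdf hi
  · exact nv_mul_integral_FBstar_of_notMem hwA hwB hLB hrel hγ hcdf hi

omit hwA hwB hLB in
lemma lamA_mul_eq_sum (hXA : XA ≠ 0) :
    lamA XB wA wB γ * XA = ∑ i, if i ∈ OmegaA wA wB γ then γ * nv wB i / 2
      else nv wA i ^ 2 / (2 * γ * nv wB i) := by
  have hsplit : ∀ i, nv wA i ^ 2 / (2 * γ * nv wB i) = 1 / (2 * γ) * (nv wA i ^ 2 / nv wB i) :=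
    fun i => by ring
  rw [hrel, ← sum_add_sum_compl (OmegaA wA wB γ), sum_ite_of_true (fun _ h => h),
    sum_ite_of_false (fun _ h => mem_compl.1 h), lamB, ← sum_div, ← mul_sum]
  simp only [hsplit, ← mul_sum]
  field_simp

end Blotto

theorem stmt5_general (n : ℕ) (XA XB : ℝ) (hXA : 0 < XA) (hXAB : XA ≤ XB)
    (wA wB : Fin n → ℝ) (hwA : ∀ i, 0 < wA i) (hwB : ∀ i, 0 < wB i)
    (γ : ℝ) (hγ : 0 < γ) (heq : Eq2 XA XB wA wB γ)
    (μA : Fin n → Measure ℝ)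
    (hcdf : ∀ i x, μA i (Set.Iic x) = ENNReal.ofReal (FAstar XA XB wA wB γ i x))
    (xA : Fin n → ℝ) (hx : ∀ i, 0 ≤ xA i) (hsum : ∑ i, xA i ≤ XA) :
    ∑ i, nv wA i * FBstar XA XB wA wB γ i (xA i)
      ≤ ∑ i, nv wA i * ∫ x in Set.Ici (0 : ℝ), FBstar XA XB wA wB γ i x ∂(μA i) := by
  have hXB : 0 < XB := hXA.trans_le hXAB
  have hLB := lamB_pos hXA hXB hγ hwA hwB heq
  have hrel := lamA_eq_mul_lamB hXA hXB hγ hwA hwB heq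
  have hLA : 0 ≤ lamA XB wA wB γ := hrel ▸ (mul_pos hγ hLB).le
  calc ∑ i, nv wA i * FBstar XA XB wA wB γ i (xA i)
      ≤ ∑ i, (lamA XB wA wB γ * xA i
          + if i ∈ OmegaA wA wB γ then nv wA i - γ * nv wB i else 0) :=
        sum_le_sum fun i _ => nv_mul_FBstar_le hwA hLB hrel (hx i)
    _ ≤ lamA XB wA wB γ * XA
          + ∑ i, (if i ∈ OmegaA wA wB γ then nv wA i - γ * nv wB i else 0) := by
        rw [sum_add_distrib, ← mul_sum]
        gcongr
    _ = ∑ i, (if i ∈ OmegaA wA wB γ then nv wA i - γ * nv wB i / 2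
          else nv wA i ^ 2 / (2 * γ * nv wB i)) := by
        rw [lamA_mul_eq_sum hrel hγ hXA.ne', ← sum_add_distrib]
        exact sum_congr rfl fun i _ => by split_ifs <;> ring
    _ = _ := sum_congr rfl fun i _ => (nv_mul_integral_FBstar hwA hwB hLB hrel hγ (hcdf i)).symm

/-- Playing the marginals F_{A*_i} is a best response against F_{B*_i}. -/
theorem stmt5 (n : ℕ) (hn : 1 ≤ n) (XA XB : ℝ) (hXA : 0 < XA) (hXAB : XA ≤ XB)
    (wA wB : Fin n → ℝ) (hwA : ∀ i, 0 < wA i) (hwB : ∀ i, 0 < wB i)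
    (γ : ℝ) (hγ : 0 < γ) (heq : Eq2 XA XB wA wB γ)
    (μA : Fin n → Measure ℝ) (hprob : ∀ i, IsProbabilityMeasure (μA i))
    (hcdf : ∀ i x, μA i (Set.Iic x) = ENNReal.ofReal (FAstar XA XB wA wB γ i x))
    (xA : Fin n → ℝ) (hx : ∀ i, 0 ≤ xA i) (hsum : ∑ i, xA i ≤ XA) :
    ∑ i, nv wA i * FBstar XA XB wA wB γ i (xA i)
      ≤ ∑ i, nv wA i * ∫ x in Set.Ici (0 : ℝ), FBstar XA XB wA wB γ i x ∂(μA i) :=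
  stmt5_general n XA XB hXA hXAB wA wB hwA hwB γ hγ heq μA hcdf xA hx hsum
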